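/- Tadmor entropy-conservation condition for the relativistic hydrodynamics flux: fix γ > 1 and two states W_L = (ρ_L, u_L, p_L), W_R = (ρ_R, u_R, p_R) with ρ_L, ρ_R, p_L, p_R > 0, |u_L| < 1, |u_R| < 1, and with ρ_L ≠ ρ_R and β_L ≠ β_R where β = ρ/p (so that the logarithmic means are given by difference quotients). For a state W define Γ = 1/√(1−|u|²), s = ln(p ρ^{−γ}), and the entropy variables V(W) = ((γ − s)/(γ − 1) + β, Γβux, Γβuy, Γβuz, −Γβ) ∈ ℝ⁵. Let F̃ˣ(W_L, W_R) ∈ ℝ⁵ be the entropy conservative flux defined componentwise by F̃₅ = −Γ̄·(k ρ^ln m̄_x + m̄_x ρ̄/β̄)/(m̄_x² + m̄_y² + m̄_z² − Γ̄²), F̃₁ = ρ^ln m̄_x, F̃₂ = (m̄_x/Γ̄)·F̃₅ + ρ̄/β̄, F̃₃ = (m̄_y/Γ̄)·F̃₅, F̃₄ = (m̄_z/Γ̄)·F̃₅, where z̄ = (z_L + z_R)/2 for z ∈ {ρ, β, Γ, m_x, m_y, m_z} with m = Γu, ρ^ln = (ρ_L − ρ_R)/(ln ρ_L − ln ρ_R),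 β^ln = (β_L − β_R)/(ln β_L − ln β_R), and k = 1/((γ−1)β^ln) + 1. Then (V(W_R) − V(W_L)) · F̃ˣ(W_L, W_R) = ρ_R Γ_R u^x_R − ρ_L Γ_L u^x_L, i.e., the jump in entropy variables contracted with the flux equals the jump in the entropy potential φˣ = ρΓuˣ. -/

import Mathlib

open Matrix

/-- Primitive state of relativistic hydrodynamics: `(ρ, uₓ, u_y, u_z, p)`. -/
structure RHDState where
  rho : ℝ
  ux : ℝ
  uy : ℝ
  uz : ℝ
  p : ℝ

/-- Lorentz factor `Γ = 1/√(1 − |u|²)`. -/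
noncomputable def Gam (W : RHDState) : ℝ :=
  1 / Real.sqrt (1 - (W.ux ^ 2 + W.uy ^ 2 + W.uz ^ 2))

/-- `β = ρ/p`. -/
noncomputable def betaOf (W : RHDState) : ℝ := W.rho / W.p

/-- In the flux formula `m` denotes `Γ·u`. -/
noncomputable def mx (W : RHDState) : ℝ := Gam W * W.ux
noncomputable def my (W : RHDState) : ℝ := Gam W * W.uy
noncomputable def mz (W : RHDState) : ℝ := Gam W * W.uz

/-- Entropy variables `V = ((γ−s)/(γ−1) + β, Γβuₓ, Γβu_y, Γβu_z, −Γβ)` with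
`s = ln(p ρ^{−γ})`. -/
noncomputable def entVars (γ : ℝ) (W : RHDState) : Fin 5 → ℝ :=
  let s := Real.log (W.p * W.rho ^ (-γ))
  ![(γ - s) / (γ - 1) + betaOf W,
    Gam W * betaOf W * W.ux,
    Gam W * betaOf W * W.uy,
    Gam W * betaOf W * W.uz,
    -(Gam W * betaOf W)]

/-- Two-point entropy conservative numerical flux `F̃ˣ(W_L, W_R)`, with the logarithmic
means given by the difference quotients (the states being assumed distinct in density and
in `β`). -/
noncomputable def ecFluxX (γ : ℝ) (L R : RHDState) : Fin 5 → ℝ :=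
  let ρln := (L.rho - R.rho) / (Real.log L.rho - Real.log R.rho)
  let βln := (betaOf L - betaOf R) / (Real.log (betaOf L) - Real.log (betaOf R))
  let k := 1 / ((γ - 1) * βln) + 1
  let ρb := (L.rho + R.rho) / 2
  let βb := (betaOf L + betaOf R) / 2
  let Γb := (Gam L + Gam R) / 2
  let mxb := (mx L + mx R) / 2
  let myb := (my L + my R) / 2
  let mzb := (mz L + mz R) / 2
  let F5 := -Γb * (k * ρln * mxb + mxb * ρb / βb) / (mxb ^ 2 + myb ^ 2 + mzb ^ 2 - Γb ^ 2)
  ![ρln * mxb,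
    (mxb / Γb) * F5 + ρb / βb,
    (myb / Γb) * F5,
    (mzb / Γb) * F5,
    F5]

lemma gam_pos (W : RHDState) (hu : W.ux ^ 2 + W.uy ^ 2 + W.uz ^ 2 < 1) : 0 < Gam W := by
  have h1 : 0 < 1 - (W.ux ^ 2 + W.uy ^ 2 + W.uz ^ 2) := by linarith
  rw [Gam]
  positivity

lemma gam_sq (W : RHDState) (hu : W.ux ^ 2 + W.uy ^ 2 + W.uz ^ 2 < 1) :
    (Gam W * W.ux) ^ 2 + (Gam W * W.uy) ^ 2 + (Gam W * W.uz) ^ 2 = Gam W ^ 2 - 1 := by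
  have h1 : 0 < 1 - (W.ux ^ 2 + W.uy ^ 2 + W.uz ^ 2) := by linarith
  have hsq : Gam W ^ 2 * (1 - (W.ux ^ 2 + W.uy ^ 2 + W.uz ^ 2)) = 1 := by
    rw [Gam, div_pow, one_pow, Real.sq_sqrt h1.le]
    field_simp
  linear_combination -hsq

lemma dneg (ax ay az bx by_ bz gL gR : ℝ) (hgL : 0 < gL) (hgR : 0 < gR)
    (hmL : ax ^ 2 + ay ^ 2 + az ^ 2 = gL ^ 2 - 1)
    (hmR : bx ^ 2 + by_ ^ 2 + bz ^ 2 = gR ^ 2 - 1) :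
    ((ax + bx) / 2) ^ 2 + ((ay + by_) / 2) ^ 2 + ((az + bz) / 2) ^ 2
      - ((gL + gR) / 2) ^ 2 < 0 := by
  have hCS : (ax * bx + ay * by_ + az * bz) ^ 2
      ≤ (ax ^ 2 + ay ^ 2 + az ^ 2) * (bx ^ 2 + by_ ^ 2 + bz ^ 2) := by
    nlinarith [sq_nonneg (ax * by_ - ay * bx), sq_nonneg (ax * bz - az * bx),
      sq_nonneg (ay * bz - az * by_)]
  rw [hmL, hmR] at hCS
  nlinarith [hCS, mul_pos hgL hgR, sq_nonneg (gL + gR),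
    sq_nonneg (ax * bx + ay * by_ + az * bz + 1 + gL * gR)]

lemma rhd_key (γ X Y ρL ρR bL bR gL gR mxL myL mzL mxR myR mzR Δ1 : ℝ)
    (hγ : γ - 1 ≠ 0) (hX : X ≠ 0) (hY : Y ≠ 0) (hb : bL - bR ≠ 0) (hβb : bL + bR ≠ 0)
    (hΓb : gL + gR ≠ 0)
    (hmL : mxL ^ 2 + myL ^ 2 + mzL ^ 2 = gL ^ 2 - 1)
    (hmR : mxR ^ 2 + myR ^ 2 + mzR ^ 2 = gR ^ 2 - 1)
    (hD : ((mxL + mxR) / 2) ^ 2 + ((myL + myR) / 2) ^ 2 + ((mzL + mzR) / 2) ^ 2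
        - ((gL + gR) / 2) ^ 2 ≠ 0)
    (hΔ1 : Δ1 = -Y / (γ - 1) - X + (bR - bL)) :
    Δ1 * ((ρL - ρR) / X * ((mxL + mxR) / 2))
    + (bR * mxR - bL * mxL) *
        (((mxL + mxR) / 2 / ((gL + gR) / 2)) *
          (-( (gL + gR) / 2) * ((1 / ((γ - 1) * ((bL - bR) / Y)) + 1) * ((ρL - ρR) / X)
              * ((mxL + mxR) / 2)
            + (mxL + mxR) / 2 * ((ρL + ρR) / 2) / ((bL + bR) / 2)) /
          (((mxL + mxR) / 2) ^ 2 + ((myL + myR) / 2) ^ 2 + ((mzL + mzR) / 2) ^ 2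
            - ((gL + gR) / 2) ^ 2))
          + (ρL + ρR) / 2 / ((bL + bR) / 2))
    + (bR * myR - bL * myL) *
        (((myL + myR) / 2 / ((gL + gR) / 2)) *
          (-( (gL + gR) / 2) * ((1 / ((γ - 1) * ((bL - bR) / Y)) + 1) * ((ρL - ρR) / X)
              * ((mxL + mxR) / 2)
            + (mxL + mxR) / 2 * ((ρL + ρR) / 2) / ((bL + bR) / 2)) /
          (((mxL + mxR) / 2) ^ 2 + ((myL + myR) / 2) ^ 2 + ((mzL + mzR) / 2) ^ 2
            - ((gL + gR) / 2) ^ 2)))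
    + (bR * mzR - bL * mzL) *
        (((mzL + mzR) / 2 / ((gL + gR) / 2)) *
          (-( (gL + gR) / 2) * ((1 / ((γ - 1) * ((bL - bR) / Y)) + 1) * ((ρL - ρR) / X)
              * ((mxL + mxR) / 2)
            + (mxL + mxR) / 2 * ((ρL + ρR) / 2) / ((bL + bR) / 2)) /
          (((mxL + mxR) / 2) ^ 2 + ((myL + myR) / 2) ^ 2 + ((mzL + mzR) / 2) ^ 2
            - ((gL + gR) / 2) ^ 2)))
    + (-(gR * bR) + gL * bL) *
        (-( (gL + gR) / 2) * ((1 / ((γ - 1) * ((bL - bR) / Y)) + 1) * ((ρL - ρR) / X)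
              * ((mxL + mxR) / 2)
            + (mxL + mxR) / 2 * ((ρL + ρR) / 2) / ((bL + bR) / 2)) /
          (((mxL + mxR) / 2) ^ 2 + ((myL + myR) / 2) ^ 2 + ((mzL + mzR) / 2) ^ 2
            - ((gL + gR) / 2) ^ 2))
    = ρR * mxR - ρL * mxL := by
  set mxb := (mxL + mxR) / 2 with hmxb
  set myb := (myL + myR) / 2 with hmyb
  set mzb := (mzL + mzR) / 2 with hmzb
  set Γb := (gL + gR) / 2 with hΓbdef
  set D := mxb ^ 2 + myb ^ 2 + mzb ^ 2 - Γb ^ 2 with hDdef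
  set E := (1 / ((γ - 1) * ((bL - bR) / Y)) + 1) * ((ρL - ρR) / X) * mxb
      + mxb * ((ρL + ρR) / 2) / ((bL + bR) / 2) with hE
  set F5 := -Γb * E / D with hF5
  have hΓb' : Γb ≠ 0 := by
    rw [hΓbdef]; intro h; apply hΓb; linarith [h]
  have hc : (bR * mxR - bL * mxL) * mxb + (bR * myR - bL * myL) * myb
      + (bR * mzR - bL * mzL) * mzb + (-(gR * bR) + gL * bL) * Γb
      = (bR - bL) * D := by
    rw [hmxb, hmyb, hmzb, hΓbdef, hDdef, hmxb, hmyb, hmzb, hΓbdef]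
    linear_combination (bR / 2 - (bR - bL) / 4) * hmR + (-(bL / 2) - (bR - bL) / 4) * hmL
  have hcoef : (bR * mxR - bL * mxL) * (mxb / Γb) + (bR * myR - bL * myL) * (myb / Γb)
      + (bR * mzR - bL * mzL) * (mzb / Γb) + (-(gR * bR) + gL * bL)
      = (bR - bL) * D / Γb := by
    field_simp
    linear_combination hc
  have hF5tot : ((bR * mxR - bL * mxL) * (mxb / Γb) + (bR * myR - bL * myL) * (myb / Γb)
      + (bR * mzR - bL * mzL) * (mzb / Γb) + (-(gR * bR) + gL * bL)) * F5
      = -(bR - bL) * E := by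
    rw [hcoef, hF5]
    field_simp
  have hfinal : Δ1 * ((ρL - ρR) / X * mxb) + (bR * mxR - bL * mxL) * ((ρL + ρR) / 2 / ((bL + bR) / 2))
      + (-(bR - bL) * E) = ρR * mxR - ρL * mxL := by
    rw [hΔ1, hE]
    have h1 : (γ - 1) * ((bL - bR) / Y) ≠ 0 := by
      apply mul_ne_zero hγ (div_ne_zero hb hY)
    field_simp
    ring
  calc _ = Δ1 * ((ρL - ρR) / X * mxb)
        + (bR * mxR - bL * mxL) * ((ρL + ρR) / 2 / ((bL + bR) / 2))
        + ((bR * mxR - bL * mxL) * (mxb / Γb) + (bR * myR - bL * myL) * (myb / Γb)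
          + (bR * mzR - bL * mzL) * (mzb / Γb) + (-(gR * bR) + gL * bL)) * F5 := by ring
    _ = _ := by rw [hF5tot]; exact hfinal

/-- Tadmor entropy-conservation condition: the jump in entropy variables contracted with the
entropy conservative flux equals the jump in the entropy potential `φˣ = ρΓuˣ`. -/
theorem ecFluxX_tadmor (γ : ℝ) (hγ : 1 < γ) (L R : RHDState)
    (hρL : 0 < L.rho) (hρR : 0 < R.rho) (hpL : 0 < L.p) (hpR : 0 < R.p)
    (huL : L.ux ^ 2 + L.uy ^ 2 + L.uz ^ 2 < 1)
    (huR : R.ux ^ 2 + R.uy ^ 2 + R.uz ^ 2 < 1)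
    (hρ : L.rho ≠ R.rho) (hβ : betaOf L ≠ betaOf R) :
    (entVars γ R - entVars γ L) ⬝ᵥ ecFluxX γ L R
      = R.rho * Gam R * R.ux - L.rho * Gam L * L.ux := by
  have hγ1 : γ - 1 ≠ 0 := by linarith
  have hbL : 0 < betaOf L := div_pos hρL hpL
  have hbR : 0 < betaOf R := div_pos hρR hpR
  have hgL : 0 < Gam L := gam_pos L huL
  have hgR : 0 < Gam R := gam_pos R huR
  have hmL := gam_sq L huL
  have hmR := gam_sq R huR
  have hX : Real.log L.rho - Real.log R.rho ≠ 0 := by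
    intro h
    exact hρ (Real.log_injOn_pos (Set.mem_Ioi.mpr hρL) (Set.mem_Ioi.mpr hρR) (by linarith))
  have hY : Real.log (betaOf L) - Real.log (betaOf R) ≠ 0 := by
    intro h
    exact hβ (Real.log_injOn_pos (Set.mem_Ioi.mpr hbL) (Set.mem_Ioi.mpr hbR) (by linarith))
  have hb : betaOf L - betaOf R ≠ 0 := sub_ne_zero.mpr hβ
  have hβb : betaOf L + betaOf R ≠ 0 := by positivity
  have hΓb : Gam L + Gam R ≠ 0 := by positivity
  have hD : ((Gam L * L.ux + Gam R * R.ux) / 2) ^ 2 + ((Gam L * L.uy + Gam R * R.uy) / 2) ^ 2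
      + ((Gam L * L.uz + Gam R * R.uz) / 2) ^ 2 - ((Gam L + Gam R) / 2) ^ 2 ≠ 0 :=
    ne_of_lt (dneg _ _ _ _ _ _ _ _ hgL hgR hmL hmR)
  have hΔ1 : ((γ - Real.log (R.p * R.rho ^ (-γ))) / (γ - 1) + betaOf R)
      - ((γ - Real.log (L.p * L.rho ^ (-γ))) / (γ - 1) + betaOf L)
      = -(Real.log (betaOf L) - Real.log (betaOf R)) / (γ - 1)
        - (Real.log L.rho - Real.log R.rho) + (betaOf R - betaOf L) := by
    have hsL : Real.log (L.p * L.rho ^ (-γ)) = Real.log L.p + (-γ) * Real.log L.rho := by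
      rw [Real.log_mul (ne_of_gt hpL) (ne_of_gt (Real.rpow_pos_of_pos hρL _)),
        Real.log_rpow hρL]
    have hsR : Real.log (R.p * R.rho ^ (-γ)) = Real.log R.p + (-γ) * Real.log R.rho := by
      rw [Real.log_mul (ne_of_gt hpR) (ne_of_gt (Real.rpow_pos_of_pos hρR _)),
        Real.log_rpow hρR]
    have hβL : Real.log (betaOf L) = Real.log L.rho - Real.log L.p := by
      rw [betaOf, Real.log_div (ne_of_gt hρL) (ne_of_gt hpL)]
    have hβR : Real.log (betaOf R) = Real.log R.rho - Real.log R.p := by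
      rw [betaOf, Real.log_div (ne_of_gt hρR) (ne_of_gt hpR)]
    rw [hsL, hsR, hβL, hβR]
    field_simp
    ring
  have key := rhd_key γ (Real.log L.rho - Real.log R.rho)
    (Real.log (betaOf L) - Real.log (betaOf R)) L.rho R.rho (betaOf L) (betaOf R)
    (Gam L) (Gam R) (Gam L * L.ux) (Gam L * L.uy) (Gam L * L.uz)
    (Gam R * R.ux) (Gam R * R.uy) (Gam R * R.uz)
    (((γ - Real.log (R.p * R.rho ^ (-γ))) / (γ - 1) + betaOf R)
      - ((γ - Real.log (L.p * L.rho ^ (-γ))) / (γ - 1) + betaOf L))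
    hγ1 hX hY hb hβb hΓb hmL hmR hD hΔ1
  simp only [entVars, ecFluxX, mx, my, mz, dotProduct, Fin.sum_univ_five,
    Pi.sub_apply, Matrix.cons_val_zero, Matrix.cons_val_one, Matrix.head_cons,
    Matrix.cons_val_two, Matrix.tail_cons, Matrix.cons_val_three, Matrix.cons_val_four,
    Matrix.head_fin_const]
  linear_combination key
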